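/- arXiv:2206.11244 — 9 statements merged into one kernel-verified Lean document; each statement's English description precedes it below -/
import Mathlib

section
/- Let C be a category admitting all filtered colimits and let F : C ⥤ Set be a functor preserving filtered colimits. If (c, x) is a compact object of the category of elements ∫F, then c is a compact object of C (i.e. the projection π : ∫F → C preserves compact objects). -/
open CategoryTheory CategoryTheory.Limits Opposite

universe v u

/-!
A morphism `f : c ⟶ colim D` produces the element `F(f)(x)` of `F(colim D) = colim (D ⋙ F)`,
which comes from some `y : F(D j)`. Restricted to the final subcategory `Under j`, the diagram
`D` lifts to a filtered diagram in `∫F` through `(D j, y)`, whose colimit is `colim D` with the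
element `F(f)(x)`; so `f` is a morphism out of the compact object `(c, x)` into a filtered colimit,
and factors through some `D k`. Essential uniqueness of the factorisation is obtained the same
way, after first equalising `F(f)(x)` and `F(g)(x)` at some stage using that `F` preserves the
colimit.
-/

universe w v₁ u₁ v₂ u₂

namespace CategoryTheory.CategoryOfElements

variable {C : Type u₁} [Category.{v₁} C] (F : C ⥤ Type w)

/-- The element at the cocone point is forced by any single leg, so nonemptiness suffices. -/
def isColimitOfIsColimitMapCocone {I : Type u₂} [Category.{v₂} I] [Nonempty I]
    {G : I ⥤ F.Elements} (s : Cocone G) (hs : IsColimit ((π F).mapCocone s)) :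
    IsColimit s where
  desc s' := ⟨hs.desc ((π F).mapCocone s'), by
    obtain ⟨i⟩ := ‹Nonempty I›
    have hi : F.map (s.ι.app i).1 (G.obj i).2 = s.pt.2 := (s.ι.app i).2
    have hi' : F.map (s'.ι.app i).1 (G.obj i).2 = s'.pt.2 := (s'.ι.app i).2
    change F.map (hs.desc ((π F).mapCocone s')) s.pt.2 = s'.pt.2
    rw [← hi, ← hi']
    exact (F.map_comp_apply _ _ _).symm.trans
      (congrArg (F.map · (G.obj i).2) (hs.fac ((π F).mapCocone s') i))⟩
  fac s' i := by ext; exact hs.fac _ i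
  uniq s' m hm := by
    ext
    exact hs.uniq ((π F).mapCocone s') m.1 fun i ↦ congrArg Subtype.val (hm i)

instance {I : Type u₂} [Category.{v₂} I] [Nonempty I] : ReflectsColimitsOfShape I (π F) where
  reflectsColimit := ⟨fun hs ↦ ⟨isColimitOfIsColimitMapCocone F _ hs⟩⟩

variable {J : Type u₂} [Category.{v₂} J] (D : J ⥤ C) {j : J} (y : F.obj (D.obj j))

@[simps]
def underLift : Under j ⥤ F.Elements where
  obj u := F.elementsMk (D.obj u.right) (F.map (D.map u.hom) y)
  map m := ⟨D.map m.right, by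
    simp [← Functor.map_comp_apply, ← D.map_comp, Under.w m]⟩

def underLiftCocone (t : Cocone D) : Cocone (underLift F D y) where
  pt := F.elementsMk t.pt (F.map (t.ι.app j) y)
  ι.app u := ⟨t.ι.app u.right,
    (F.map_comp_apply _ _ _).symm.trans (congrArg (F.map · y) (t.w u.hom))⟩
  ι.naturality _ _ m := by ext; exact (t.w m.right).trans (Category.comp_id _).symm

noncomputable def isColimitUnderLiftCocone [IsFilteredOrEmpty J] {t : Cocone D}
    (ht : IsColimit t) : IsColimit (underLiftCocone F D y t) :=
  have : Nonempty (Under j) := ⟨Under.mk (𝟙 j)⟩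
  isColimitOfReflects (π F) ((Functor.Final.isColimitWhiskerEquiv (Under.forget j) t).symm ht)

section

variable {F} {c : C} (x : F.obj c) [IsFiltered J] {D} {t : Cocone D} (ht : IsColimit t)
  (hFt : IsColimit (F.mapCocone t))
  [∀ (j : J) (y : F.obj (D.obj j)),
    PreservesColimit (underLift F D y) (coyoneda.obj (op (F.elementsMk c x)))]
include x ht hFt

lemma exists_hom_of_preservesColimit_coyoneda_elementsMk (f : c ⟶ t.pt) :
    ∃ (j : J) (p : c ⟶ D.obj j), p ≫ t.ι.app j = f := by
  obtain ⟨j, y, hy⟩ := Types.jointly_surjective_of_isColimit hFt (F.map f x)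
  obtain ⟨u, p, hp⟩ := exists_hom_of_preservesColimit_coyoneda
    (isColimitUnderLiftCocone F D y ht) (⟨f, hy.symm⟩ : F.elementsMk c x ⟶ _)
  exact ⟨u.right, p.1, congrArg Subtype.val hp⟩

lemma exists_eq_of_preservesColimit_coyoneda_elementsMk_self {i : J} (f g : c ⟶ D.obj i)
    (h : f ≫ t.ι.app i = g ≫ t.ι.app i) :
    ∃ (k : J) (a : i ⟶ k), f ≫ D.map a = g ≫ D.map a := by
  have hF : (F.mapCocone t).ι.app i (F.map f x) = (F.mapCocone t).ι.app i (F.map g x) := by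
    simp only [Functor.mapCocone_ι_app]
    rw [← F.map_comp_apply, ← F.map_comp_apply, h]
  obtain ⟨k, a, ha⟩ := (Types.FilteredColimit.isColimit_eq_iff' hFt _ _).mp hF
  let y := F.map (D.map a) (F.map f x)
  let f' : F.elementsMk c x ⟶ (underLift F D y).obj (Under.mk (𝟙 k)) :=
    ⟨f ≫ D.map a, (F.map_comp_apply f (D.map a) x).trans (by simp [y])⟩
  let g' : F.elementsMk c x ⟶ (underLift F D y).obj (Under.mk (𝟙 k)) :=
    ⟨g ≫ D.map a, (F.map_comp_apply g (D.map a) x).trans (by simpa [y] using ha.symm)⟩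
  have h' : (f ≫ D.map a) ≫ t.ι.app k = (g ≫ D.map a) ≫ t.ι.app k := by
    rw [Category.assoc, Category.assoc, t.w, h]
  obtain ⟨u, m, hm⟩ := exists_eq_of_preservesColimit_coyoneda_self
    (isColimitUnderLiftCocone F D y ht) f' g' (Subtype.ext h')
  refine ⟨u.right, a ≫ m.right, ?_⟩
  have hm' : (f ≫ D.map a) ≫ D.map m.right = (g ≫ D.map a) ≫ D.map m.right :=
    congrArg Subtype.val hm
  simpa only [Functor.map_comp, Category.assoc] using hm'

end

lemma preservesColimit_coyoneda_of_elementsMk {c : C} (x : F.obj c) [IsFiltered J] (D : J ⥤ C)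
    [PreservesColimit D F]
    [∀ (j : J) (y : F.obj (D.obj j)),
      PreservesColimit (underLift F D y) (coyoneda.obj (op (F.elementsMk c x)))] :
    PreservesColimit D (coyoneda.obj (op c)) where
  preserves ht := ⟨Types.FilteredColimit.isColimitOf' _ _
    (fun f ↦ (exists_hom_of_preservesColimit_coyoneda_elementsMk x ht
      (isColimitOfPreserves F ht) f).imp fun _ ⟨p, hp⟩ ↦ ⟨p, hp.symm⟩)
    (fun _ f g h ↦ exists_eq_of_preservesColimit_coyoneda_elementsMk_self x ht
      (isColimitOfPreserves F ht) f g h)⟩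

end CategoryTheory.CategoryOfElements

theorem elements_pi_preserves_compact_general
    {C : Type u} [Category.{v} C]
    (F : C ⥤ Type v) [PreservesFilteredColimits F]
    (c : C) (x : F.obj c)
    [PreservesFilteredColimits (coyoneda.obj (op (F.elementsMk c x)))] :
    PreservesFilteredColimits (coyoneda.obj (op c)) :=
  ⟨fun _ _ _ ↦ ⟨fun {D} ↦ CategoryOfElements.preservesColimit_coyoneda_of_elementsMk F x D⟩⟩

/-- If `C` has filtered colimits and `F : C ⥤ Type` preserves them, then the projection
`π : ∫F ⥤ C` from the category of elements preserves compact objects: if `(c, x)` is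
compact in `∫F` then `c` is compact in `C`. Here an object `X` is *compact* if
`Hom(X, -)` preserves filtered colimits. -/
theorem elements_pi_preserves_compact
    {C : Type u} [Category.{v} C] [HasFilteredColimits C]
    (F : C ⥤ Type v) [PreservesFilteredColimits F]
    (c : C) (x : F.obj c)
    [PreservesFilteredColimits (coyoneda.obj (op (F.elementsMk c x)))] :
    PreservesFilteredColimits (coyoneda.obj (op c)) :=
  elements_pi_preserves_compact_general F c x
end

section
/- Let C be a category admitting all filtered colimits and let F : C ⥤ Set be a functor preserving filtered colimits. If c is a compact object of C, then for every element x ∈ F(c) the pair (c, x) is a compact object of the category of elements ∫F (i.e. the projection π : ∫F → C reflects compact objects). -/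
open CategoryTheory CategoryTheory.Limits Opposite

universe v u

/-!
Let `D : J ⥤ ∫F` be filtered. The colimit of `D ⋙ π` in `C` lifts to `∫F`: the images in
`F(colim)` of the elements carried by the `D j` all agree, since `J` is connected. A morphism
from `(c, x)` to this colimit factors in `C` through some `D j` by compactness of `c`; the two
elements of `F(D j)` it relates become equal in `F(colim) = colim F(D j)`, so they already agree
at a later stage `k`, where the factorization becomes a morphism of `∫F`. Injectivity is
inherited from `Hom(c, -)`, as morphisms of `∫F` are determined by their underlying morphisms.
-/

namespace CategoryTheory.CategoryOfElements

variable {C : Type*} [Category C] {F : C ⥤ Type*} {J : Type*} [Category J]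

section LiftCocone

variable [IsConnected J] (D : J ⥤ F.Elements) (c : Cocone (D ⋙ π F))

noncomputable def coconePtElement : F.obj c.pt :=
  F.map (c.ι.app (Classical.arbitrary J)) (D.obj _).2

lemma map_ι_app_snd (j : J) : F.map (c.ι.app j) (D.obj j).2 = coconePtElement D c := by
  refine constant_of_preserves_morphisms (α := F.obj c.pt)
    (fun j => F.map (c.ι.app j) (D.obj j).2) (fun j j' f => ?_) j _
  rw [← c.w f]
  exact (F.map_comp_apply _ _ _).trans (congrArg _ (map_snd (D.map f)))

noncomputable def liftCocone : Cocone D where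
  pt := F.elementsMk c.pt (coconePtElement D c)
  ι :=
    { app j := homMk _ _ (c.ι.app j) (map_ι_app_snd D c j)
      naturality j j' f := ext _ _ _ (by simpa using! c.w f) }

noncomputable def isColimitLiftCocone {c : Cocone (D ⋙ π F)} (hc : IsColimit c) :
    IsColimit (liftCocone D c) where
  desc s := homMk _ _ (hc.desc ((π F).mapCocone s)) (by
    change F.map _ (coconePtElement D c) = _
    rw [← map_ι_app_snd D c (Classical.arbitrary J)]
    exact (F.map_comp_apply _ _ _).symm.trans
      ((congrArg (fun m => F.map m _) (hc.fac _ _)).trans (map_snd (s.ι.app _))))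
  fac s j := ext _ _ _ (hc.fac _ j)
  uniq s m hm := ext _ _ _ <|
    hc.uniq ((π F).mapCocone s) m.val fun j => congrArg Subtype.val (hm j)

end LiftCocone

section Compact

variable [IsFilteredOrEmpty J] {D : J ⥤ F.Elements} {s : Cocone D} {X : C} (x : F.obj X)

lemma exists_eq_comp_ι_app (hF : IsColimit (F.mapCocone ((π F).mapCocone s)))
    (hX : IsColimit ((coyoneda.obj (op X)).mapCocone ((π F).mapCocone s)))
    (g : F.elementsMk X x ⟶ s.pt) :
    ∃ (j : J) (h : F.elementsMk X x ⟶ D.obj j), g = h ≫ s.ι.app j := by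
  obtain ⟨j, h, hh : h ≫ (s.ι.app j).val = g.val⟩ := Types.jointly_surjective _ hX g.val
  have heq : F.map (s.ι.app j).val (F.map h x) = F.map (s.ι.app j).val (D.obj j).2 :=
    calc F.map (s.ι.app j).val (F.map h x) = F.map g.val x :=
          (F.map_comp_apply _ _ _).symm.trans (congrArg (fun m => F.map m x) hh)
      _ = F.map (s.ι.app j).val (D.obj j).2 := g.property.trans (map_snd _).symm
  obtain ⟨k, u, v, huv⟩ := (Types.FilteredColimit.isColimit_eq_iff _ hF).mp heq
  refine ⟨k, homMk _ _ (h ≫ (D.map u).val) ?_, ext _ _ _ ?_⟩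
  · exact (F.map_comp_apply _ _ _).trans (huv.trans (map_snd (D.map v)))
  · calc g.val = h ≫ (s.ι.app j).val := hh.symm
      _ = h ≫ (D.map u).val ≫ (s.ι.app k).val :=
          congrArg (h ≫ ·) (congrArg Subtype.val (s.w u)).symm
      _ = (h ≫ (D.map u).val) ≫ (s.ι.app k).val := (Category.assoc _ _ _).symm

noncomputable def isColimitCoyonedaMapCocone
    (hF : IsColimit (F.mapCocone ((π F).mapCocone s)))
    (hX : IsColimit ((coyoneda.obj (op X)).mapCocone ((π F).mapCocone s))) :
    IsColimit ((coyoneda.obj (op (F.elementsMk X x))).mapCocone s) :=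
  Types.FilteredColimit.isColimitOf _ _ (exists_eq_comp_ι_app x hF hX) fun i j p q hpq => by
    obtain ⟨k, u, v, huv⟩ :=
      (Types.FilteredColimit.isColimit_eq_iff _ hX).mp (congrArg Subtype.val hpq)
    exact ⟨k, u, v, ext _ _ _ huv⟩

end Compact

end CategoryTheory.CategoryOfElements

/-- If `C` has filtered colimits and `F : C ⥤ Type` preserves them, then the projection
`π : ∫F ⥤ C` from the category of elements reflects compact objects: if `c` is compact
in `C`, then for every `x ∈ F(c)` the pair `(c, x)` is compact in `∫F`. Here an object
`X` is *compact* if `Hom(X, -)` preserves filtered colimits. -/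
theorem elements_pi_reflects_compact
    {C : Type u} [Category.{v} C] [HasFilteredColimits C]
    (F : C ⥤ Type v) [PreservesFilteredColimits F]
    (c : C) [PreservesFilteredColimits (coyoneda.obj (op c))] (x : F.obj c) :
    PreservesFilteredColimits (coyoneda.obj (op (F.elementsMk c x))) := by
  refine ⟨fun J _ _ => ⟨fun {D} => ?_⟩⟩
  have := IsFiltered.isConnected J
  have hc := colimit.isColimit (D ⋙ CategoryOfElements.π F)
  exact preservesColimit_of_preserves_colimit_cocone
    (CategoryOfElements.isColimitLiftCocone D hc)
    (CategoryOfElements.isColimitCoyonedaMapCocone x (isColimitOfPreserves F hc)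
      (isColimitOfPreserves _ hc))
end

section
/- Let A be a commutative ring, I an ideal of A, and γ a divided power structure on I. Suppose there is a subset G ⊆ I consisting of nilpotent elements such that I is generated as an ideal by the set of elements γ_n(g) for g ∈ G and n ≥ 1 (i.e. I is PD-generated by nilpotent elements). Then I is a nil ideal: every element of I is nilpotent, i.e. I is contained in the nilradical of A. -/
/-! Fix a prime `P`. Since `n! • γ_n(x) = xⁿ`, either `n!` lies in `P`, and then every `a ∈ I`
lies in `P` because `aⁿ = n! • γ_n(a)`; or `n!` does not, and then `γ_n(x) ∈ P` as soon as
`xⁿ ∈ P`. A nilpotent generator `g` lies in `P`, so each `γ_n(g)` with `n ≥ 1` lies in `P`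
unless `I ≤ P` already; either way `I ≤ P`. -/

namespace DividedPowers

variable {A : Type*} [CommSemiring A] {I P : Ideal A} [P.IsPrime]

theorem le_of_natCast_factorial_mem (γ : DividedPowers I) {n : ℕ} (h : (n.factorial : A) ∈ P) :
    I ≤ P := fun a ha =>
  ‹P.IsPrime›.mem_of_pow_mem n (γ.factorial_mul_dpow_eq_pow ha ▸ P.mul_mem_right _ h)

theorem dpow_mem_or_le_of_pow_mem (γ : DividedPowers I) {n : ℕ} {x : A} (hx : x ∈ I)
    (hxn : x ^ n ∈ P) :
    γ.dpow n x ∈ P ∨ I ≤ P := by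
  rw [← γ.factorial_mul_dpow_eq_pow hx] at hxn
  exact (‹P.IsPrime›.mem_or_mem hxn).symm.imp_right γ.le_of_natCast_factorial_mem

end DividedPowers

/-- If the PD ideal `I` of a divided power ring `(A, I, γ)` is PD-generated by a set `G`
of nilpotent elements — i.e. `I` is generated as an ideal by the elements `γ_n(g)` for
`g ∈ G`, `n ≥ 1` — then `I` is a nil ideal: every element of `I` is nilpotent. -/
theorem nilIdeal_of_pdGenerated_by_nilpotents
    {A : Type*} [CommRing A] {I : Ideal A} (γ : DividedPowers I)
    (G : Set A) (hGI : G ⊆ I) (hGnil : ∀ g ∈ G, IsNilpotent g)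
    (hgen : I = Ideal.span {a | ∃ g ∈ G, ∃ n : ℕ, 1 ≤ n ∧ a = γ.dpow n g}) :
    I ≤ nilradical A := by
  rw [nilradical_eq_sInf, le_sInf_iff]
  intro P (hP : P.IsPrime)
  by_contra hIP
  refine hIP (hgen ▸ Ideal.span_le.mpr ?_)
  rintro _ ⟨g, hg, n, hn, rfl⟩
  have hgP : g ∈ P := nilradical_le_prime P (mem_nilradical.mpr (hGnil g hg))
  exact (γ.dpow_mem_or_le_of_pow_mem (hGI hg) (P.pow_mem_of_mem hgP n hn)).resolve_right hIP
end

section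
/- Let A be a commutative ring, I an ideal of A, γ a divided power structure on I, and let a ∈ I with a^e = 0 for some natural number e. Then for every n ≥ 1 and every natural number k with k ≥ ⌈e/n⌉·(n+1), one has (γ_n(a))^k = 0. In particular, γ_n(a) is nilpotent for every n ≥ 1. -/
/-!
Put `x = γₙ(a)` and `q = ⌈e/n⌉`, so that `a ^ (n * q) = 0`. On the one hand `γ_{nq}(a)` divides
`x ^ q`; on the other hand `x ^ (n * q) = (n * q)! γ_{nq}(x)`, and `(n * q)! γ_{nq}(a) = a ^ (n * q)`
vanishes. Hence `x ^ (q * (n + 1)) = x ^ q * x ^ (n * q) = 0`.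
-/

namespace DividedPowers

variable {A : Type*} [CommSemiring A] {I : Ideal A} (γ : DividedPowers I) {a : A}

theorem dpow_mul_dvd_pow_dpow (ha : a ∈ I) (n q : ℕ) :
    γ.dpow (n * q) a ∣ γ.dpow n a ^ q := by
  have h := γ.prod_dpow (s := Finset.range q) (n := fun _ ↦ n) ha
  rw [Finset.prod_const, Finset.card_range, Finset.sum_const, Finset.card_range, smul_eq_mul,
    mul_comm q n] at h
  exact h ▸ dvd_mul_left _ _

theorem dpow_mul_pow_eq_zero_of_pow_eq_zero {x : A} (ha : a ∈ I) (hx : x ∈ I) {m : ℕ}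
    (ham : a ^ m = 0) : γ.dpow m a * x ^ m = 0 := by
  rw [← γ.factorial_mul_dpow_eq_pow hx, mul_left_comm, ← mul_assoc,
    γ.factorial_mul_dpow_eq_pow ha, ham, zero_mul]

theorem dpow_pow_mul_succ_eq_zero (ha : a ∈ I) {e n q : ℕ} (hae : a ^ e = 0) (hn : n ≠ 0)
    (hen : e ≤ n * q) : γ.dpow n a ^ (q * (n + 1)) = 0 := by
  obtain ⟨c, hc⟩ := γ.dpow_mul_dvd_pow_dpow ha n q
  have hanq : a ^ (n * q) = 0 := pow_eq_zero_of_le hen hae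
  calc γ.dpow n a ^ (q * (n + 1)) = γ.dpow n a ^ q * γ.dpow n a ^ (n * q) := by ring
    _ = c * (γ.dpow (n * q) a * γ.dpow n a ^ (n * q)) := by rw [hc]; ring
    _ = 0 := by
      rw [γ.dpow_mul_pow_eq_zero_of_pow_eq_zero ha (γ.dpow_mem hn ha) hanq, mul_zero]

end DividedPowers

theorem Nat.le_mul_ceil_div {e n : ℕ} (hn : n ≠ 0) : e ≤ n * ⌈(e : ℚ) / n⌉₊ := by
  have hn' : (0 : ℚ) < n := by positivity
  exact_mod_cast (div_le_iff₀' hn').mp (Nat.le_ceil ((e : ℚ) / n))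

/-- Let `γ` be a divided power structure on an ideal `I` of a commutative ring `A`, and let
`a ∈ I` with `a ^ e = 0`.  Then for every `n ≥ 1` and every `k ≥ ⌈e/n⌉ * (n + 1)` one has
`(γ_n(a)) ^ k = 0`; in particular `γ_n(a)` is nilpotent for every `n ≥ 1`. -/
theorem dpow_pow_eq_zero_of_pow_eq_zero
    {A : Type*} [CommRing A] {I : Ideal A} (γ : DividedPowers I)
    {a : A} (ha : a ∈ I) {e : ℕ} (hae : a ^ e = 0) :
    (∀ n : ℕ, 1 ≤ n → ∀ k : ℕ,
      ⌈(e : ℚ) / (n : ℚ)⌉ * ((n : ℤ) + 1) ≤ (k : ℤ) → γ.dpow n a ^ k = 0) ∧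
    (∀ n : ℕ, 1 ≤ n → IsNilpotent (γ.dpow n a)) := by
  have hvanish (n : ℕ) (hn : 1 ≤ n) : γ.dpow n a ^ (⌈(e : ℚ) / n⌉₊ * (n + 1)) = 0 :=
    γ.dpow_pow_mul_succ_eq_zero ha hae (by omega) (Nat.le_mul_ceil_div (by omega))
  refine ⟨fun n hn k hk ↦ pow_eq_zero_of_le ?_ (hvanish n hn), fun n hn ↦ ⟨_, hvanish n hn⟩⟩
  rw [← Int.natCast_ceil_eq_ceil (by positivity)] at hk
  exact_mod_cast hk
end

section
/- For all natural numbers n ≥ 1, e, and k with k ≥ ⌈e/n⌉·(n+1), one has k·n ≥ e and (n!)^k divides (k·n − e)! (so that (k·n − e)!/(n!)^k is an integer). -/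
/-!
Write `c = ⌈e/n⌉`, so `e ≤ c n`, and split `k = a + c`; the hypothesis gives `c n ≤ a`.
Grouping `a n` objects into `a` unordered blocks of size `n` shows `(n!)^a a! ∣ (a n)!`, and
the same count for `c n` objects gives `(n!)^c ∣ (c n)! ∣ a!`. Hence
`(n!)^k ∣ (n!)^a a! ∣ (a n)! ∣ (k n - e)!`, the last step because `a n ≤ k n - e`.
-/

open Nat

namespace Nat

theorem factorial_pow_mul_factorial_dvd_factorial_mul (a : ℕ) {n : ℕ} (hn : n ≠ 0) :
    n ! ^ a * a ! ∣ (a * n)! :=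
  ⟨uniformBell a n, by rw [← uniformBell_mul_eq a hn]; ring⟩

theorem factorial_pow_dvd_factorial_mul {a c n : ℕ} (hn : n ≠ 0) (hca : c * n ≤ a) :
    n ! ^ (a + c) ∣ (a * n)! := by
  have hc : n ! ^ c ∣ a ! :=
    (dvd_mul_right _ _ |>.trans (factorial_pow_mul_factorial_dvd_factorial_mul c hn)).trans
      (factorial_dvd_factorial hca)
  rw [pow_add]
  exact (mul_dvd_mul_left _ hc).trans (factorial_pow_mul_factorial_dvd_factorial_mul a hn)

theorem le_ceil_div_mul {e n : ℕ} (hn : 0 < n) : e ≤ ⌈(e : ℚ) / n⌉₊ * n := by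
  have h : (e : ℚ) / n ≤ ⌈(e : ℚ) / n⌉₊ := le_ceil _
  rw [div_le_iff₀ (by exact_mod_cast hn)] at h
  exact_mod_cast h

end Nat

/-- For natural numbers `n ≥ 1`, `e` and `k` with `k ≥ ⌈e/n⌉ * (n + 1)`, one has
`k * n ≥ e` and `(n!)^k` divides `(k * n - e)!`. -/
theorem factorial_pow_dvd_factorial_of_ceil_le
    (n e k : ℕ) (hn : 1 ≤ n)
    (hk : ⌈(e : ℚ) / (n : ℚ)⌉ * ((n : ℤ) + 1) ≤ (k : ℤ)) :
    e ≤ k * n ∧ (Nat.factorial n) ^ k ∣ Nat.factorial (k * n - e) := by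
  set c := ⌈(e : ℚ) / n⌉₊
  have hec : e ≤ c * n := le_ceil_div_mul hn
  have hck : c * (n + 1) ≤ k := by
    rw [← Int.natCast_ceil_eq_ceil (by positivity)] at hk
    exact_mod_cast hk
  rw [mul_add_one] at hck
  obtain ⟨a, rfl⟩ : ∃ a, k = a + c := ⟨k - c, by omega⟩
  have hca : c * n ≤ a := by omega
  refine ⟨by nlinarith, ?_⟩
  exact (factorial_pow_dvd_factorial_mul (by omega) hca).trans
    (factorial_dvd_factorial (by rw [add_mul]; omega))
end

section
/- Let (C, J) be a small site, and let C' = WithTerminal C be the category obtained from C by freely adjoining a terminal object *. Then there is a Grothendieck topology J' on C' such that: (1) for every object c of C, a sieve on c in C' is J'-covering if and only if the sieve on c in C consisting of its morphisms from objects of C is J-covering; (2) the only J'-covering sieve on * is the maximal sieve. Moreover, for this topology J', the category of sheaves of sets on (C', J') is equivalent to the comma category (Set ↓ Γ), whose objects are triples (E, F, e) with E a set, F a sheaf of sets on (C, J), and e : E → Γ(F) a function, where Γ(F) denotes the set of global sections of F (the limit of F, i.e. the set of compatible families of elements of F over all objects of C). -/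
/-!
A presheaf `P` on `WithTerminal C` amounts to its restriction `F` to `C`, the set `P(*)` and a
cone from `P(*)` over `F`, i.e. a map `P(*) → lim F` (adjunction `const ⊣ lim`). This identifies
presheaves on `WithTerminal C` with `Comma (𝟭 _) lim`. Since nothing maps from `*` into `C`, a
sieve on an object of `C` and its matching families only involve arrows of `C`, so `P` satisfies
the sheaf condition there iff `F` is a `J`-sheaf; at `*` only the maximal sieve covers, and the
condition is automatic. Hence the equivalence restricts to sheaves on both sides.
-/

open CategoryTheory CategoryTheory.Limits

universe u

namespace CategoryTheory

namespace Adjunction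

variable {A B : Type*} [Category* A] [Category* B] {L : A ⥤ B} {R : B ⥤ A}

def commaEquiv (adj : L ⊣ R) : Comma L (𝟭 B) ≌ Comma (𝟭 A) R :=
  Equivalence.mk
    { obj X := ⟨X.left, X.right, adj.homEquiv _ _ X.hom⟩
      map f := ⟨f.left, f.right, by
        have hw := f.w
        dsimp at hw ⊢
        rw [← adj.homEquiv_naturality_left, ← adj.homEquiv_naturality_right, hw]⟩ }
    { obj X := ⟨X.left, X.right, (adj.homEquiv _ _).symm X.hom⟩
      map f := ⟨f.left, f.right, by
        have hw := f.w
        dsimp at hw ⊢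
        rw [← adj.homEquiv_naturality_left_symm, ← adj.homEquiv_naturality_right_symm, hw]⟩ }
    (NatIso.ofComponents (fun _ => Comma.isoMk (Iso.refl _) (Iso.refl _)) fun _ => by ext <;> simp)
    (NatIso.ofComponents (fun _ => Comma.isoMk (Iso.refl _) (Iso.refl _)) fun _ => by ext <;> simp)

end Adjunction

namespace Comma

variable {A B T : Type*} [Category* A] [Category* B] [Category* T]

def compιEquiv (L : A ⥤ T) (R : B ⥤ T) (Q : ObjectProperty B) :
    Comma L (Q.ι ⋙ R) ≌ (Q.inverseImage (Comma.snd L R)).FullSubcategory where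
  functor :=
    { obj X := ⟨⟨X.left, X.right.obj, X.hom⟩, X.right.property⟩
      map f := ObjectProperty.homMk ⟨f.left, f.right.hom, f.w⟩ }
  inverse :=
    { obj X := ⟨X.obj.left, ⟨X.obj.right, X.property⟩, X.obj.hom⟩
      map f := ⟨f.hom.left, ObjectProperty.homMk f.hom.right, f.hom.w⟩ }
  unitIso := Iso.refl _
  counitIso := Iso.refl _

end Comma

instance Presheaf.isClosedUnderIsomorphisms_isSheaf {C A : Type*} [Category* C] [Category* A]
    (J : GrothendieckTopology C) :
    ObjectProperty.IsClosedUnderIsomorphisms (Presheaf.IsSheaf J (A := A)) :=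
  ⟨fun e => (Presheaf.isSheaf_of_iso_iff e).1⟩

open Opposite Presieve WithTerminal

variable {C : Type*} [Category* C]

def GrothendieckTopology.withTerminal (J : GrothendieckTopology C) :
    GrothendieckTopology (WithTerminal C) where
  sieves
    | .of c => {S | S.functorPullback incl ∈ J c}
    | .star => {S | S = ⊤}
  top_mem'
    | .of c => J.top_mem c
    | .star => rfl
  pullback_stable' X Y S f hS := by
    match X, Y, f with
    | .of _, .of _, f => exact J.pullback_stable (down f) hS
    | .of _, .star, f => exact (false_of_from_star f).elim
    | .star, .of a, f =>
      show (S.pullback f).functorPullback incl ∈ J a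
      rw [show S = ⊤ from hS, Sieve.pullback_top]
      exact J.top_mem a
    | .star, .star, f =>
      show S.pullback f = ⊤
      rw [show S = ⊤ from hS, Sieve.pullback_top]
  transitive' X S hS R hR := by
    match X with
    | .of c => exact J.transitive (hS : S.functorPullback incl ∈ J c) _ fun _ g hg => hR hg
    | .star => simpa using hR (f := 𝟙 WithTerminal.star) (by rw [show S = ⊤ from hS]; trivial)

namespace WithTerminal

section

variable {P : (WithTerminal C)ᵒᵖ ⥤ Type*} {c : C} {S : Sieve (incl.obj c)}

def extendFamily (y : FamilyOfElements (incl.op ⋙ P) (S.functorPullback incl).arrows) :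
    FamilyOfElements P S.arrows
  | .of _, f, hf => y (down f) hf
  | .star, f, _ => (false_of_from_star f).elim

lemma compatible_of_functorPullback {x : FamilyOfElements P S.arrows}
    (hx : (x.functorPullback incl).Compatible) : x.Compatible := by
  intro Y₁ Y₂ Z g₁ g₂ f₁ f₂ h₁ h₂ comm
  match Y₁, Y₂, Z, f₁, f₂, g₁, g₂ with
  | .of _, .of _, .of _, _, _, g₁, g₂ => exact hx (down g₁) (down g₂) h₁ h₂ comm
  | .star, _, _, f₁, _, _, _ => exact (false_of_from_star f₁).elim
  | .of _, .star, _, _, f₂, _, _ => exact (false_of_from_star f₂).elim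
  | .of _, .of _, .star, _, _, g₁, _ => exact (false_of_from_star g₁).elim

lemma isAmalgamation_functorPullback_iff (x : FamilyOfElements P S.arrows)
    (t : P.obj (op (incl.obj c))) :
    (x.functorPullback incl).IsAmalgamation t ↔ x.IsAmalgamation t := by
  refine ⟨fun ht Y f hf => ?_, fun ht _ g hg => ht (incl.map g) hg⟩
  match Y, f, hf with
  | .of _, f, hf => exact ht (down f) hf
  | .star, f, _ => exact (false_of_from_star f).elim

theorem isSheafFor_iff_functorPullback :
    IsSheafFor P S.arrows ↔ IsSheafFor (incl.op ⋙ P) (S.functorPullback incl).arrows := by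
  constructor
  · intro h y hy
    obtain ⟨t, ht, hu⟩ := h (extendFamily y) (compatible_of_functorPullback hy)
    exact ⟨t, (isAmalgamation_functorPullback_iff _ t).2 ht,
      fun t' ht' => hu t' ((isAmalgamation_functorPullback_iff _ t').1 ht')⟩
  · intro h x hx
    obtain ⟨t, ht, hu⟩ := h _ (hx.functorPullback incl)
    exact ⟨t, (isAmalgamation_functorPullback_iff x t).1 ht,
      fun t' ht' => hu t' ((isAmalgamation_functorPullback_iff x t').2 ht')⟩

end

theorem isSheaf_withTerminal_iff_of_type (J : GrothendieckTopology C)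
    (P : (WithTerminal C)ᵒᵖ ⥤ Type*) :
    Presieve.IsSheaf J.withTerminal P ↔ Presieve.IsSheaf J (incl.op ⋙ P) := by
  constructor
  · intro h c S hS
    have hS' : S.functorPushforward incl ∈ J.withTerminal (incl.obj c) := by
      show Sieve.functorPullback incl _ ∈ J c
      rwa [Sieve.functorPullback_functorPushforward_eq]
    simpa only [isSheafFor_iff_functorPullback, Sieve.functorPullback_functorPushforward_eq]
      using h _ hS'
  · intro h X S hS
    match X with
    | .of _ => exact isSheafFor_iff_functorPullback.2 (h _ hS)
    | .star => exact (show S = ⊤ from hS) ▸ isSheafFor_top P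

variable {A : Type*} [Category* A]

theorem isSheaf_withTerminal_iff (J : GrothendieckTopology C) (P : (WithTerminal C)ᵒᵖ ⥤ A) :
    Presheaf.IsSheaf J.withTerminal P ↔ Presheaf.IsSheaf J (incl.op ⋙ P) :=
  forall_congr' fun E => isSheaf_withTerminal_iff_of_type J (P ⋙ coyoneda.obj (op E))

variable [HasLimitsOfShape Cᵒᵖ A]

noncomputable def opFunctorEquivComma :
    ((WithTerminal C)ᵒᵖ ⥤ A) ≌ Comma (𝟭 A) (lim : (Cᵒᵖ ⥤ A) ⥤ A) :=
  (opEquiv C).congrLeft.trans (WithInitial.equivComma.trans constLimAdj.commaEquiv)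

noncomputable def sheafEquivComma (J : GrothendieckTopology C) :
    Sheaf J.withTerminal A ≌ Comma (𝟭 A) (sheafToPresheaf J A ⋙ lim) :=
  (opFunctorEquivComma.congrFullSubcategory
      (by ext P; exact (isSheaf_withTerminal_iff J P).symm)).trans
    (Comma.compιEquiv _ _ _).symm

end WithTerminal

end CategoryTheory

/-- Freely adjoining a terminal object `*` to a site `(C, J)` yields a site `(C', J')` in which
the covering sieves on objects of `C` are exactly those whose restriction to `C` is `J`-covering,
the only covering sieve on `*` is the maximal one, and sheaves of sets on `(C', J')` form a
category equivalent to the comma category `(Set ↓ Γ)`, where `Γ` sends a sheaf on `(C, J)` to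
its set of global sections (the limit of the underlying presheaf). -/
theorem sierpinski_cone_site
    {C : Type u} [SmallCategory C] (J : GrothendieckTopology C) :
    ∃ J' : GrothendieckTopology (WithTerminal C),
      (∀ (c : C) (S : Sieve (WithTerminal.incl.obj c)),
        S ∈ J' (WithTerminal.incl.obj c) ↔ S.functorPullback WithTerminal.incl ∈ J c) ∧
      (∀ S : Sieve (WithTerminal.star : WithTerminal C),
        S ∈ J' WithTerminal.star ↔ S = ⊤) ∧
      Nonempty (Sheaf J' (Type u) ≌
        Comma (𝟭 (Type u)) (sheafToPresheaf J (Type u) ⋙ lim)) :=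
  ⟨J.withTerminal, fun _ _ => Iff.rfl, fun _ => Iff.rfl, ⟨WithTerminal.sheafEquivComma J⟩⟩
end

section
/- Let R be a commutative ring with an ideal I_R carrying a divided power structure γ_R, and let A be a commutative R-algebra with an ideal I carrying a divided power structure γ, such that the structure map R → A sends I_R into I and commutes with the divided powers (γ_n applied to the image of x equals the image of γ_{R,n}(x) for all x ∈ I_R, n ≥ 1). Say that (A, I, γ) is of finite PD type over (R, I_R, γ_R) if there exist finitely many elements x₁, …, x_p ∈ I and y₁, …, y_q ∈ A such that A is generated as an R-algebra by the elements γ_k(x_i) (k ≥ 1, 1 ≤ i ≤ p) together with y₁, …, y_q, and I is generated as an ideal by the image of I_R together with the elements γ_k(x_i) (k ≥ 1). Suppose a₁, …, a_m ∈ A generate the unit ideal of A, and for each i the localization A_{a_i} carries a divided power structure γ^{(i)} on the ideal I·A_{a_i} such that the localization map A → A_{a_i} commutes with the divided powers on I. If for every i the PD ring (A_{a_i}, I·A_{a_i}, γ^{(i)}) is of finite PD type over (R, I_R, γ_R), then (A, I, γ) is of finite PD type over (R, I_R, γ_R). -/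
/-- `(A, I, γ)` is of *finite PD type* over a divided power ring mapping to it via
`φ : R →+* A` (with PD ideal `I_R`) if there are finitely many elements `x₁, …, x_p ∈ I`
and `y₁, …, y_q ∈ A` such that `A` is generated as an `R`-algebra by the divided powers
`γ_k(x_i)` (`k ≥ 1`) together with the `y_j`, and `I` is generated as an ideal by the
image of `I_R` together with the `γ_k(x_i)` (`k ≥ 1`). -/
def IsFinitePDType {R A : Type*} [CommRing R] [CommRing A] (φ : R →+* A)
    (I_R : Ideal R) {I : Ideal A} (γ : DividedPowers I) : Prop :=
  ∃ (p q : ℕ) (x : Fin p → A) (y : Fin q → A),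
    (∀ i, x i ∈ I) ∧
    Subring.closure
      (Set.range ⇑φ ∪ Set.range y ∪
        {b | ∃ k : ℕ, 1 ≤ k ∧ ∃ i, b = γ.dpow k (x i)}) = ⊤ ∧
    I = Ideal.span
      (⇑φ '' (I_R : Set R) ∪ {b | ∃ k : ℕ, 1 ≤ k ∧ ∃ i, b = γ.dpow k (x i)})

/-! Lift the finitely many local generators to `A`, clearing denominators by powers of `aᵢ`.
Since `γ` and `γ⁽ⁱ⁾` are compatible, `γ_k` of a lift of `x` is `γ⁽ⁱ⁾_k(x)` times a unit of
`A_{aᵢ}`. Take all the lifts, the `aᵢ` and coefficients `cᵢ` with `∑ cᵢ aᵢ = 1` as global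
generators: the subring and the ideal they generate become `A_{aᵢ}` and `I·A_{aᵢ}` after
localizing at each `aᵢ`, hence are `A` and `I`, because the `aᵢ` generate the unit ideal. -/

section LocalizationAway

variable {A B : Type*} [CommRing A] [CommRing B] [Algebra A B]

variable (B) in
def Subring.localizedAway (S : Subring A) {c : A} (hc : c ∈ S) : Subring B where
  carrier := {t | ∃ n : ℕ, t * algebraMap A B c ^ n ∈ S.map (algebraMap A B)}
  mul_mem' := by
    rintro s t ⟨m, hm⟩ ⟨n, hn⟩
    exact ⟨m + n, by simpa only [pow_add, mul_mul_mul_comm] using mul_mem hm hn⟩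
  one_mem' := ⟨0, by simpa only [pow_zero, mul_one] using one_mem _⟩
  add_mem' := by
    rintro s t ⟨m, hm⟩ ⟨n, hn⟩
    have hcS : algebraMap A B c ∈ S.map (algebraMap A B) := ⟨c, hc, rfl⟩
    refine ⟨m + n, ?_⟩
    convert add_mem (mul_mem hm (pow_mem hcS n)) (mul_mem hn (pow_mem hcS m)) using 1
    ring
  zero_mem' := ⟨0, by simpa only [zero_mul] using zero_mem _⟩
  neg_mem' := by
    rintro t ⟨n, hn⟩
    exact ⟨n, by simpa only [neg_mul] using neg_mem hn⟩

theorem Subring.exists_pow_mul_mem_of_algebraMap_mem_localizedAway {S : Subring A} {c : A}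
    (hc : c ∈ S) [IsLocalization.Away c B] {b : A}
    (hb : algebraMap A B b ∈ S.localizedAway B hc) : ∃ n : ℕ, c ^ n * b ∈ S := by
  obtain ⟨n, s, hs, hsb⟩ := hb
  rw [← map_pow, ← map_mul] at hsb
  obtain ⟨k, hk⟩ := IsLocalization.Away.exists_of_eq c hsb
  refine ⟨k + n, ?_⟩
  convert mul_mem (pow_mem hc k) hs using 1
  rw [hk]
  ring

theorem Subring.eq_top_of_localizedAway_eq_top {ι : Type*} [Fintype ι] {S : Subring A}
    (a c : ι → A) (hac : ∑ i, c i * a i = 1) (ha : ∀ i, a i ∈ S) (hc : ∀ i, c i ∈ S)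
    (h : ∀ i, S.localizedAway (Localization.Away (a i)) (ha i) = ⊤) : S = ⊤ :=
  eq_top_iff.2 fun b _ ↦
    Subalgebra.mem_of_finsetSum_eq_one_of_pow_smul_mem (subalgebraOfSubring S) Finset.univ a c
      hac ha hc b fun i ↦
        S.exists_pow_mul_mem_of_algebraMap_mem_localizedAway (ha i) (by rw [h i]; trivial)

theorem Ideal.le_of_map_away_le {ι : Type*} (a : ι → A) (ha : Ideal.span (Set.range a) = ⊤)
    {I J : Ideal A}
    (h : ∀ i, I.map (algebraMap A (Localization.Away (a i))) ≤
      J.map (algebraMap A (Localization.Away (a i)))) : I ≤ J := by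
  intro f hf
  refine Submodule.mem_of_span_eq_top_of_smul_pow_mem J _ ha f ?_
  rintro ⟨-, i, rfl⟩
  obtain ⟨-, ⟨n, rfl⟩, hn⟩ := (IsLocalization.algebraMap_mem_map_algebraMap_iff
    (Submonoid.powers (a i)) (Localization.Away (a i)) J f).1 (h i (Ideal.mem_map_of_mem _ hf))
  exact ⟨n, hn⟩

theorem IsLocalization.Away.exists_mul_pow_eq_algebraMap_of_mem_map (c : A)
    [IsLocalization.Away c B] {J : Ideal A} {t : B} (ht : t ∈ J.map (algebraMap A B)) :
    ∃ n : ℕ, ∃ z ∈ J, t * algebraMap A B c ^ n = algebraMap A B z := by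
  obtain ⟨⟨z, -, n, rfl⟩, hz⟩ :=
    (IsLocalization.mem_map_algebraMap_iff (Submonoid.powers c) B).1 ht
  exact ⟨n, z, z.2, by rw [← hz, map_pow]⟩

end LocalizationAway

namespace DividedPowers

variable {A : Type*} [CommRing A] {I : Ideal A}

def dpowSet (γ : DividedPowers I) {ι : Type*} (x : ι → A) : Set A :=
  {b | ∃ k : ℕ, 1 ≤ k ∧ ∃ i, b = γ.dpow k (x i)}

theorem dpowSet_comp_subset (γ : DividedPowers I) {ι κ : Type*} (x : ι → A) (f : κ → ι) :
    γ.dpowSet (x ∘ f) ⊆ γ.dpowSet x := by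
  rintro _ ⟨k, hk, i, rfl⟩
  exact ⟨k, hk, f i, rfl⟩

theorem dpowSet_comp_of_surjective (γ : DividedPowers I) {ι κ : Type*} (x : ι → A)
    {f : κ → ι} (hf : f.Surjective) : γ.dpowSet (x ∘ f) = γ.dpowSet x := by
  refine (γ.dpowSet_comp_subset x f).antisymm ?_
  rintro _ ⟨k, hk, i, rfl⟩
  obtain ⟨j, rfl⟩ := hf i
  exact ⟨k, hk, j, rfl⟩

theorem map_dpow_eq_dpow_mul_pow {B : Type*} [CommRing B] {J : Ideal B}
    (γ : DividedPowers I) (δ : DividedPowers J) {f : A →+* B}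
    (hf : ∀ n : ℕ, 1 ≤ n → ∀ b ∈ I, δ.dpow n (f b) = f (γ.dpow n b))
    {z : A} (hz : z ∈ I) {x u : B} (hx : x ∈ J) (hzx : x * u = f z) {k : ℕ} (hk : 1 ≤ k) :
    f (γ.dpow k z) = δ.dpow k x * u ^ k := by
  rw [← hf k hk z hz, ← hzx, δ.dpow_mul_right hx]

end DividedPowers

open DividedPowers

theorem isFinitePDType_of_finite {R A : Type*} [CommRing R] [CommRing A] (φ : R →+* A)
    (I_R : Ideal R) {I : Ideal A} (γ : DividedPowers I) {ι κ : Type*} [Finite ι] [Finite κ]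
    (x : ι → A) (y : κ → A) (hx : ∀ i, x i ∈ I)
    (hgen : Subring.closure (Set.range φ ∪ Set.range y ∪ γ.dpowSet x) = ⊤)
    (hideal : I = Ideal.span (φ '' I_R ∪ γ.dpowSet x)) :
    IsFinitePDType φ I_R γ := by
  obtain ⟨p, ⟨e⟩⟩ := Finite.exists_equiv_fin ι
  obtain ⟨q, ⟨e'⟩⟩ := Finite.exists_equiv_fin κ
  have hx' : γ.dpowSet (x ∘ e.symm) = γ.dpowSet x :=
    γ.dpowSet_comp_of_surjective x e.symm.surjective
  refine ⟨p, q, x ∘ e.symm, y ∘ e'.symm, fun i ↦ hx _, ?_, ?_⟩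
  · change Subring.closure (_ ∪ γ.dpowSet (x ∘ e.symm)) = ⊤
    rwa [e'.symm.surjective.range_comp y, hx']
  · change I = Ideal.span (_ ∪ γ.dpowSet (x ∘ e.symm))
    rwa [hx']

section LocalGenerators

variable {R A B : Type*} [CommRing R] [CommRing A] [CommRing B] [Algebra A B]
  (φ : R →+* A) (I_R : Ideal R) {I : Ideal A} (γ : DividedPowers I)
  {δ : DividedPowers (I.map (algebraMap A B))}
  (hδ : ∀ n : ℕ, 1 ≤ n → ∀ b ∈ I, δ.dpow n (algebraMap A B b) = algebraMap A B (γ.dpow n b))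
  {c : A} {ι : Type*} {x : ι → B} (hx : ∀ j, x j ∈ I.map (algebraMap A B))
  {z : ι → A} (hz : ∀ j, z j ∈ I) {n : ι → ℕ}
  (hzx : ∀ j, x j * algebraMap A B c ^ n j = algebraMap A B (z j))
include hδ hx hz hzx

theorem localizedAway_eq_top_of_closure_dpowSet_eq_top {S : Subring A} (hc : c ∈ S)
    (hφ : Set.range φ ⊆ S) {κ : Type*} {y : κ → B}
    (hy : Set.range y ⊆ (S.localizedAway B hc : Set B))
    (hzS : γ.dpowSet z ⊆ S)
    (hgen : Subring.closure
      (Set.range ((algebraMap A B).comp φ) ∪ Set.range y ∪ δ.dpowSet x) = ⊤) :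
    S.localizedAway B hc = ⊤ := by
  refine top_unique (hgen ▸ Subring.closure_le.2 ?_)
  rintro _ ((⟨r, rfl⟩ | hyt) | ⟨k, hk, j, rfl⟩)
  · exact ⟨0, φ r, hφ ⟨r, rfl⟩, by simp⟩
  · exact hy hyt
  · exact ⟨n j * k, γ.dpow k (z j), hzS ⟨k, hk, j, rfl⟩,
      by rw [pow_mul, map_dpow_eq_dpow_mul_pow γ δ hδ (hz j) (hx j) (hzx j) hk]⟩

theorem map_le_map_of_eq_span_dpowSet {J : Ideal A} (hφ : φ '' I_R ⊆ J) (hzJ : γ.dpowSet z ⊆ J)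
    (hideal : I.map (algebraMap A B) =
      Ideal.span ((algebraMap A B).comp φ '' I_R ∪ δ.dpowSet x)) [IsLocalization.Away c B] :
    I.map (algebraMap A B) ≤ J.map (algebraMap A B) := by
  rw [hideal, Ideal.span_le]
  rintro _ (⟨r, hr, rfl⟩ | ⟨k, hk, j, rfl⟩)
  · exact Ideal.mem_map_of_mem _ (hφ ⟨r, hr, rfl⟩)
  · have hcu : IsUnit ((algebraMap A B c ^ n j) ^ k) :=
      ((IsLocalization.Away.algebraMap_isUnit (S := B) c).pow _).pow _
    rw [SetLike.mem_coe, ← Ideal.mul_unit_mem_iff_mem _ hcu,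
      ← map_dpow_eq_dpow_mul_pow γ δ hδ (hz j) (hx j) (hzx j) hk]
    exact Ideal.mem_map_of_mem _ (hzJ ⟨k, hk, j, rfl⟩)

end LocalGenerators

theorem isFinitePDType_of_localizations_general
    {R A : Type*} [CommRing R] [CommRing A] (φ : R →+* A)
    (I_R : Ideal R) (I : Ideal A) (γ : DividedPowers I)
    (hmap : ∀ r ∈ I_R, φ r ∈ I)
    {m : ℕ} (a : Fin m → A) (ha : Ideal.span (Set.range a) = ⊤)
    (γ' : ∀ i, DividedPowers (I.map (algebraMap A (Localization.Away (a i)))))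
    (hcomp' : ∀ i, ∀ n : ℕ, 1 ≤ n → ∀ b ∈ I,
      (γ' i).dpow n (algebraMap A (Localization.Away (a i)) b) =
        algebraMap A (Localization.Away (a i)) (γ.dpow n b))
    (hloc : ∀ i, IsFinitePDType
      ((algebraMap A (Localization.Away (a i))).comp φ) I_R (γ' i)) :
    IsFinitePDType φ I_R γ := by
  obtain ⟨c, hc⟩ := (Submodule.mem_span_range_iff_exists_fun A).1
    (ha ▸ Submodule.mem_top : (1 : A) ∈ Ideal.span (Set.range a))
  choose p q x y hxI hgen hideal using hloc
  choose nz z hzI hz using fun i j ↦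
    IsLocalization.Away.exists_mul_pow_eq_algebraMap_of_mem_map (a i) (hxI i j)
  choose nw w hw using fun i l ↦ IsLocalization.Away.surj (a i) (y i l)
  let X : (Σ i, Fin (p i)) → A := fun s ↦ z s.1 s.2
  let Y : (Σ i, Fin (q i)) ⊕ (Fin m ⊕ Fin m) → A := Sum.elim (fun s ↦ w s.1 s.2) (Sum.elim a c)
  refine isFinitePDType_of_finite φ I_R γ X Y (fun s ↦ hzI s.1 s.2) ?_ ?_
  · set S := Subring.closure (Set.range φ ∪ Set.range Y ∪ γ.dpowSet X)
    have hYS : ∀ s, Y s ∈ S := fun s ↦ Subring.subset_closure (.inl (.inr ⟨s, rfl⟩))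
    have haS : ∀ i, a i ∈ S := fun i ↦ hYS (.inr (.inl i))
    have hyS : ∀ i,
        Set.range (y i) ⊆ (S.localizedAway (Localization.Away (a i)) (haS i) : Set _) := by
      rintro i _ ⟨l, rfl⟩
      exact ⟨nw i l, w i l, hYS (.inl ⟨i, l⟩), (hw i l).symm⟩
    refine Subring.eq_top_of_localizedAway_eq_top a c (by simpa only [smul_eq_mul] using hc) haS
      (fun i ↦ hYS (.inr (.inr i))) fun i ↦
        localizedAway_eq_top_of_closure_dpowSet_eq_top φ γ (hcomp' i) (hxI i) (hzI i) (hz i) (haS i)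
          (fun _ hr ↦ Subring.subset_closure (.inl (.inl hr))) (hyS i)
          ((γ.dpowSet_comp_subset X (Sigma.mk i)).trans fun _ hb ↦ Subring.subset_closure (.inr hb))
          (hgen i)
  · refine le_antisymm (Ideal.le_of_map_away_le a ha fun i ↦ ?_) (Ideal.span_le.2 ?_)
    · exact map_le_map_of_eq_span_dpowSet φ I_R γ (hcomp' i) (hxI i) (hzI i) (hz i)
        (fun _ hr ↦ Ideal.subset_span (.inl hr))
        ((γ.dpowSet_comp_subset X (Sigma.mk i)).trans fun _ hb ↦ Ideal.subset_span (.inr hb))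
        (hideal i)
    · rintro _ (⟨r, hr, rfl⟩ | ⟨k, hk, s, rfl⟩)
      · exact hmap r hr
      · exact γ.dpow_mem (Nat.one_le_iff_ne_zero.mp hk) (hzI s.1 s.2)

/-- Being of finite PD type is a local property: if `a₁, …, a_m` generate the unit ideal
of `A` and each localization `(A_{aᵢ}, I·A_{aᵢ}, γ⁽ⁱ⁾)` is of finite PD type over
`(R, I_R, γ_R)`, then so is `(A, I, γ)`. -/
theorem isFinitePDType_of_localizations
    {R A : Type*} [CommRing R] [CommRing A] (φ : R →+* A)
    (I_R : Ideal R) (γR : DividedPowers I_R) (I : Ideal A) (γ : DividedPowers I)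
    (hmap : ∀ r ∈ I_R, φ r ∈ I)
    (hcomp : ∀ n : ℕ, 1 ≤ n → ∀ r ∈ I_R, γ.dpow n (φ r) = φ (γR.dpow n r))
    {m : ℕ} (a : Fin m → A) (ha : Ideal.span (Set.range a) = ⊤)
    (γ' : ∀ i, DividedPowers (I.map (algebraMap A (Localization.Away (a i)))))
    (hcomp' : ∀ i, ∀ n : ℕ, 1 ≤ n → ∀ b ∈ I,
      (γ' i).dpow n (algebraMap A (Localization.Away (a i)) b) =
        algebraMap A (Localization.Away (a i)) (γ.dpow n b))
    (hloc : ∀ i, IsFinitePDType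
      ((algebraMap A (Localization.Away (a i))).comp φ) I_R (γ' i)) :
    IsFinitePDType φ I_R γ :=
  isFinitePDType_of_localizations_general φ I_R I γ hmap a ha γ' hcomp' hloc
end

section
/- Consider the category whose objects are pairs (A, f) of a set A with a surjective function f : A → A, and whose morphisms (A, f) → (A', f') are functions g : A → A' with g ∘ f = f' ∘ g (equivalently, the full subcategory of the category of sets with an action of the additive monoid ℕ on those objects where the action of the generator is surjective). This category has all filtered colimits, computed on underlying sets. The object (ℤ, n ↦ n + 1) is not compact, and moreover it is not isomorphic to the colimit of any filtered diagram of compact objects in this category. -/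
open CategoryTheory CategoryTheory.Limits Opposite

/-- A set equipped with a surjective self-map (equivalently, an `ℕ`-set on which the
generator acts surjectively). -/
structure SurjSelfMap : Type 1 where
  carrier : Type
  f : carrier → carrier
  surj : Function.Surjective f

namespace SurjSelfMap

/-- Morphisms are equivariant maps: `g ∘ f = f' ∘ g`. -/
instance : Category SurjSelfMap where
  Hom X Y := {g : X.carrier → Y.carrier // ∀ x, g (X.f x) = Y.f (g x)}
  id X := ⟨id, fun _ => rfl⟩
  comp g h := ⟨fun x => h.1 (g.1 x), fun x => by simp only []; rw [g.2, h.2]⟩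

/-- The forgetful functor to underlying sets. -/
def forget : SurjSelfMap ⥤ Type where
  obj X := X.carrier
  map g := TypeCat.ofHom g.1

/-- The object `(ℤ, n ↦ n + 1)`. -/
def ints : SurjSelfMap :=
  ⟨ℤ, fun n => n + 1, fun n => ⟨n - 1, by ring⟩⟩

/-!
A compact object has only periodic points. If `x` is not periodic, let `y ↦ d(y)` be the number of
steps `y` needs to enter the forward orbit of `x`. Then `d(f y) = d(y) - 1`, so `d` is a morphism to
`(ℕ, n ↦ n - 1)`, and `d` is unbounded because `x` has preimages of every depth and is not periodic.
The telescope `ℕ → ℕ → ⋯` along `n ↦ n - 1` has the point as colimit, so `d` and `0` have the same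
image there; compactness makes them agree at some finite stage `k`, i.e. `d - k = 0`.

Since colimits are computed on underlying sets, every point of a colimit of compact objects comes
from a periodic point and is periodic, whereas `n ↦ n + 1` has no periodic point.
-/

end SurjSelfMap

open Function Set

theorem Nat.sInf_setOf_succ_of_monotone {p : ℕ → Prop} (hp : Monotone p) :
    sInf {k | p (k + 1)} = sInf {k | p k} - 1 := by
  rcases Nat.eq_zero_or_pos (sInf {k | p k}) with h | h
  · rw [h]
    rcases Nat.sInf_eq_zero.mp h with h0 | hempty
    · exact Nat.sInf_eq_zero.mpr (Or.inl (hp (Nat.zero_le 1) h0))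
    · have : {k | p (k + 1)} = ∅ :=
        eq_empty_of_forall_notMem fun k hk => eq_empty_iff_forall_notMem.mp hempty _ hk
      rw [this, Nat.sInf_empty]
  · have := Nat.sInf_add (p := p) (n := 1) h
    omega

section OrbitDepth

variable {α : Type*} (f : α → α)

/-- The number of steps `y` needs to enter the forward orbit of `x`; `0` if it never does
(`sInf ∅ = 0`). -/
noncomputable def orbitDepth (x y : α) : ℕ := sInf {k | ∃ j, f^[k] y = f^[j] x}

theorem orbitDepth_apply (x y : α) : orbitDepth f x (f y) = orbitDepth f x y - 1 := by
  have hmono : Monotone fun k => ∃ j, f^[k] y = f^[j] x :=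
    monotone_nat_of_le_succ fun k ⟨j, hj⟩ =>
      ⟨j + 1, by rw [iterate_succ_apply', hj, iterate_succ_apply']⟩
  simp only [orbitDepth, ← iterate_succ_apply]
  exact Nat.sInf_setOf_succ_of_monotone hmono

theorem orbitDepth_eq_of_iterate_eq {x y : α} {k : ℕ} (hx : x ∉ periodicPts f)
    (hy : f^[k] y = x) : orbitDepth f x y = k := by
  refine le_antisymm (Nat.sInf_le ⟨0, hy⟩) (le_csInf ⟨k, 0, hy⟩ fun m ⟨j, hm⟩ => ?_)
  by_contra! hmk
  refine hx ⟨k - m + j, by omega, ?_⟩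
  calc f^[k - m + j] x = f^[k - m] (f^[m] y) := by rw [iterate_add_apply, hm]
    _ = x := by rw [← iterate_add_apply, Nat.sub_add_cancel hmk.le, hy]

end OrbitDepth

namespace SurjSelfMap

@[ext] lemma hom_ext {X Y : SurjSelfMap} {g h : X ⟶ Y} (w : g.1 = h.1) : g = h := Subtype.ext w

lemma mem_periodicPts_of_hom {X Y : SurjSelfMap} (g : X ⟶ Y) {x : X.carrier}
    (hx : x ∈ periodicPts X.f) : g.1 x ∈ periodicPts Y.f :=
  Semiconj.mapsTo_periodicPts g.2 hx

lemma iterate_ints_f (p : ℕ) (n : ℤ) : ints.f^[p] n = n + (p : ℤ) := by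
  show (· + 1)^[p] n = _
  simp

lemma notMem_periodicPts_ints (n : ℤ) : n ∉ periodicPts ints.f := by
  rintro ⟨p, hp, hper⟩
  have : n + p = n := (iterate_ints_f p n).symm.trans hper
  omega

section Colimits

variable {J : Type} [Category.{0} J] (K : J ⥤ SurjSelfMap)

def selfMapNatTrans : K ⋙ forget ⟶ K ⋙ forget where
  app j := TypeCat.ofHom (K.obj j).f
  naturality _ _ φ := by ext x; exact ((K.map φ).2 x).symm

lemma colimMap_selfMapNatTrans_ι (j : J) (x : (K.obj j).carrier) :
    colimMap (selfMapNatTrans K) (colimit.ι (K ⋙ forget) j x) =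
      colimit.ι (K ⋙ forget) j ((K.obj j).f x) :=
  types_congr_hom (ι_colimMap (selfMapNatTrans K) j) x

noncomputable def colimitCocone : Cocone K where
  pt := ⟨colimit (K ⋙ forget), colimMap (selfMapNatTrans K), by
    intro z
    obtain ⟨j, y, rfl⟩ := Types.jointly_surjective' z
    obtain ⟨y, rfl⟩ := (K.obj j).surj y
    exact ⟨_, colimMap_selfMapNatTrans_ι K j y⟩⟩
  ι.app j := ⟨colimit.ι (K ⋙ forget) j, fun x => (colimMap_selfMapNatTrans_ι K j x).symm⟩
  ι.naturality _ _ φ := hom_ext (funext (colimit.w_apply (F := K ⋙ forget) φ))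

noncomputable def colimitCoconeIsColimit : IsColimit (colimitCocone K) where
  desc s := ⟨colimit.desc (K ⋙ forget) (forget.mapCocone s), fun z => by
    obtain ⟨j, y, rfl⟩ := Types.jointly_surjective' z
    let d : colimit (K ⋙ forget) → s.pt.carrier := colimit.desc (K ⋙ forget) (forget.mapCocone s)
    calc d (colimMap (selfMapNatTrans K) (colimit.ι (K ⋙ forget) j y))
        = d (colimit.ι (K ⋙ forget) j ((K.obj j).f y)) :=
          congrArg d (colimMap_selfMapNatTrans_ι K j y)
      _ = (s.ι.app j).1 ((K.obj j).f y) := colimit.ι_desc_apply _ j _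
      _ = s.pt.f ((s.ι.app j).1 y) := (s.ι.app j).2 y
      _ = s.pt.f (d (colimit.ι (K ⋙ forget) j y)) :=
          congrArg s.pt.f (colimit.ι_desc_apply (forget.mapCocone s) j y).symm⟩
  fac s j := hom_ext (funext (colimit.ι_desc_apply (forget.mapCocone s) j))
  uniq s m hm := hom_ext <| funext fun z => by
    obtain ⟨j, y, rfl⟩ := Types.jointly_surjective' z
    exact (congrArg (fun g => g.1 y) (hm j)).trans
      (colimit.ι_desc_apply (forget.mapCocone s) j y).symm

instance : HasColimitsOfShape J SurjSelfMap := ⟨fun K => ⟨⟨_, colimitCoconeIsColimit K⟩⟩⟩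

instance : PreservesColimitsOfShape J forget :=
  ⟨fun {K} => preservesColimit_of_preserves_colimit_cocone (colimitCoconeIsColimit K)
    (colimit.isColimit (K ⋙ forget))⟩

end Colimits

lemma mem_periodicPts_of_isColimit {J : Type} [Category.{0} J] {K : J ⥤ SurjSelfMap}
    (hK : ∀ j (x : (K.obj j).carrier), x ∈ periodicPts (K.obj j).f) {c : Cocone K}
    (hc : IsColimit c) (z : c.pt.carrier) : z ∈ periodicPts c.pt.f := by
  obtain ⟨j, y, rfl⟩ := Types.jointly_surjective (K ⋙ forget) (isColimitOfPreserves forget hc) z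
  exact mem_periodicPts_of_hom (c.ι.app j) (hK j y)

abbrev natPred : SurjSelfMap := ⟨ℕ, fun n => n - 1, fun n => ⟨n + 1, rfl⟩⟩

def point : SurjSelfMap := ⟨PUnit, id, surjective_id⟩

instance (X : SurjSelfMap) : Subsingleton (X ⟶ point) := ⟨fun _ _ => hom_ext (funext fun _ => rfl)⟩

def truncation : ℕ ⥤ SurjSelfMap where
  obj _ := natPred
  map {i j} _ := ⟨fun (n : ℕ) => n - (j - i), fun n => by dsimp [natPred]; omega⟩
  map_id i := by ext (n : ℕ); show n - (i - i) = n; simp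
  map_comp {i j k} u v := by
    have := leOfHom u; have := leOfHom v
    ext (n : ℕ); show n - (k - i) = n - (j - i) - (k - j); omega

def truncationCocone : Cocone truncation where
  pt := point
  ι := { app _ := ⟨fun _ => PUnit.unit, fun _ => rfl⟩ }

lemma ι_app_eq_of_cocone_truncation (s : Cocone truncation) (i n : ℕ) :
    (s.ι.app i).1 n = (s.ι.app 0).1 (0 : ℕ) := by
  have hi : (s.ι.app (i + n)).1 (n - (i + n - i)) = (s.ι.app i).1 n :=
    congrArg (fun g => g.1 n) (s.w (homOfLE (Nat.le_add_right i n)))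
  have h0 : (s.ι.app (i + n)).1 ((0 : ℕ) - (i + n - 0)) = (s.ι.app 0).1 (0 : ℕ) :=
    congrArg (fun g => g.1 (0 : ℕ)) (s.w (homOfLE (Nat.zero_le (i + n))))
  rw [Nat.add_sub_cancel_left, Nat.sub_self] at hi
  rw [Nat.zero_sub] at h0
  rw [← hi, ← h0]

def truncationCoconeIsColimit : IsColimit truncationCocone where
  desc s := ⟨fun _ => (s.ι.app 0).1 (0 : ℕ), fun _ => (s.ι.app 0).2 (0 : ℕ)⟩
  fac s i := by ext n; exact (ι_app_eq_of_cocone_truncation s i n).symm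
  uniq s m w := by ext ⟨⟩; exact congrArg (fun g => g.1 (0 : ℕ)) (w 0)

lemma bddAbove_range_of_hom_natPred (X : SurjSelfMap)
    [PreservesColimitsOfShape ℕ (coyoneda.obj (op X))] (g : X ⟶ natPred) :
    BddAbove (range g.1) := by
  have hc := isColimitOfPreserves (coyoneda.obj (op X)) truncationCoconeIsColimit
  let zero : X ⟶ natPred := ⟨fun _ => 0, fun _ => rfl⟩
  obtain ⟨k, u, hk⟩ := (Types.FilteredColimit.isColimit_eq_iff' hc (i := 0) g zero).mp
    (Subsingleton.elim (α := X ⟶ point) _ _)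
  refine ⟨k, ?_⟩
  rintro _ ⟨x, rfl⟩
  have : g.1 x - (k - 0) = 0 - (k - 0) := congrArg (fun h => h.1 x) hk
  rw [Nat.sub_zero, Nat.zero_sub] at this
  exact Nat.sub_eq_zero_iff_le.mp this

theorem mem_periodicPts_of_preservesColimitsOfShape (X : SurjSelfMap)
    [PreservesColimitsOfShape ℕ (coyoneda.obj (op X))] (x : X.carrier) :
    x ∈ periodicPts X.f := by
  by_contra hx
  obtain ⟨k, hk⟩ := bddAbove_range_of_hom_natPred X ⟨orbitDepth X.f x, orbitDepth_apply X.f x⟩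
  obtain ⟨y, hy⟩ := X.surj.iterate (k + 1) x
  have : orbitDepth X.f x y ≤ k := hk ⟨y, rfl⟩
  rw [orbitDepth_eq_of_iterate_eq X.f hx hy] at this
  omega

/-- The category of sets with a surjective self-map has all filtered colimits, computed
on underlying sets; the object `(ℤ, +1)` is not compact, and it is not isomorphic to the
colimit of any filtered diagram of compact objects.  (An object `X` is *compact* if
`Hom(X, -)` preserves filtered colimits.) -/
theorem ints_not_filtered_colimit_of_compacts :
    HasFilteredColimits SurjSelfMap ∧
    PreservesFilteredColimits forget ∧
    ¬ PreservesFilteredColimits (coyoneda.obj (op ints)) ∧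
    (∀ (J : Type) [SmallCategory J] [IsFiltered J] (K : J ⥤ SurjSelfMap),
      (∀ j, PreservesFilteredColimits (coyoneda.obj (op (K.obj j)))) →
      ∀ (c : Cocone K), IsColimit c → IsEmpty (c.pt ≅ ints)) := by
  refine ⟨⟨fun _ _ _ => inferInstance⟩, ⟨fun _ _ _ => inferInstance⟩, fun _ => ?_,
    fun J _ _ K _ c hc => ⟨fun e => ?_⟩⟩
  · exact notMem_periodicPts_ints 0 (mem_periodicPts_of_preservesColimitsOfShape ints (0 : ℤ))
  · have hper := mem_periodicPts_of_isColimit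
      (fun j => mem_periodicPts_of_preservesColimitsOfShape (K.obj j)) hc (e.inv.1 (0 : ℤ))
    exact notMem_periodicPts_ints _ (mem_periodicPts_of_hom e.hom hper)

end SurjSelfMap
end

section
/- Consider the category of towers of sets ⋯ → A₂ → A₁ → A₀ (i.e. functors from the opposite of the poset ℕ to Set), and its full subcategory consisting of those towers in which every transition map A_{n+1} → A_n is surjective. This subcategory is closed under filtered colimits (computed levelwise), and every object of it in which some (equivalently, every) A_n is nonempty fails to be compact; that is, the only compact object of this subcategory is the empty tower (⋯ → ∅ → ∅ → ∅). -/
open CategoryTheory CategoryTheory.Limits Opposite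

/-- A tower of sets `⋯ → A₂ → A₁ → A₀` (a functor `ℕᵒᵖ ⥤ Type`) has surjective
transitions if every map `A_{n+1} → A_n` is surjective. -/
def SurjTower (T : ℕᵒᵖ ⥤ Type) : Prop :=
  ∀ n : ℕ, Function.Surjective (T.map (homOfLE (Nat.le_succ n)).op)

/-!
Evaluated at a level, a colimit of towers is a colimit of sets, every element of which comes from
some stage of the diagram; so surjectivity of the transitions passes to colimits.

For non-compactness, let `markerTower m` have one point at the levels `≤ m` and two points above
`m`. These towers have surjective transitions and form a sequential diagram in `m`. A nonempty
tower `T` with surjective transitions is inhabited at every level and has two maps to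
`markerTower 0`: the constant one and the one picking the second point at every positive level.
At level `n` they become equal from stage `n` on, so they agree in the colimit; but at stage `k`
they still differ at level `k + 1`. Compactness of `T` would make them agree at some finite stage.
-/

lemma SurjTower.of_isColimit {J : Type} [SmallCategory J] {K : J ⥤ (ℕᵒᵖ ⥤ Type)}
    {c : Cocone K} (hc : IsColimit c) (hK : ∀ j, SurjTower (K.obj j)) : SurjTower c.pt := by
  intro n y
  obtain ⟨j, x, rfl⟩ := Types.jointly_surjective_of_isColimit
    (isColimitOfPreserves ((evaluation _ _).obj (op n)) hc) y
  obtain ⟨x', rfl⟩ := hK j n x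
  exact ⟨(c.ι.app j).app _ x', (NatTrans.naturality_apply (c.ι.app j) _ x').symm⟩

instance SurjTower.isClosedUnderColimitsOfShape (J : Type) [SmallCategory J] :
    ObjectProperty.IsClosedUnderColimitsOfShape SurjTower J where
  colimitsOfShape_le _ := fun ⟨h⟩ => SurjTower.of_isColimit h.isColimit h.prop_diag_obj

lemma SurjTower.nonempty_obj {T : ℕᵒᵖ ⥤ Type} (hT : SurjTower T) {n : ℕ}
    (hn : Nonempty (T.obj (op n))) (k : ℕ) : Nonempty (T.obj (op k)) := by
  obtain ⟨a⟩ := hn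
  induction k with
  | zero => exact ⟨T.map (homOfLE (Nat.zero_le n)).op a⟩
  | succ k ih => exact ih.elim fun b => ⟨(hT k b).choose⟩

-- The points of `markerTower m` at level `n`: `true` is only allowed above level `m`.
abbrev Marker (m n : ℕ) : Type := {b : Bool // b → m < n}

namespace Marker

def bot (m n : ℕ) : Marker m n := ⟨false, by simp⟩

def top (m n : ℕ) : Marker m n := ⟨decide (m < n), by simp⟩

def restrict {m n : ℕ} (m' n' : ℕ) (b : Marker m n) : Marker m' n' :=
  ⟨b.1 && decide (m' < n'), by simp⟩

variable {m n : ℕ}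

lemma restrict_self (b : Marker m n) : b.restrict m n = b := by
  obtain ⟨_ | _, hb⟩ := b <;> simp_all [restrict]

lemma restrict_restrict {m' n' : ℕ} (m'' n'' : ℕ) (h : m'' < n'' → m' < n') (b : Marker m n) :
    (b.restrict m' n').restrict m'' n'' = b.restrict m'' n'' := by
  obtain ⟨_ | _, hb⟩ := b <;> simp [restrict]; tauto

lemma restrict_eq_bot {m' n' : ℕ} (h : ¬ m' < n') (b : Marker m n) :
    b.restrict m' n' = bot m' n' :=
  Subtype.ext (by simp [restrict, bot, h])

lemma restrict_top {m' n' : ℕ} (h : m' < n' → m < n) : (top m n).restrict m' n' = top m' n' :=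
  Subtype.ext (by simp [restrict, top]; tauto)

lemma top_ne_bot (h : m < n) : top m n ≠ bot m n := by
  simp [top, bot, Subtype.ext_iff, h]

end Marker

def markerTower (m : ℕ) : ℕᵒᵖ ⥤ Type where
  obj n := Marker m n.unop
  map {_ n'} _ := ↾Marker.restrict m n'.unop
  map_id _ := ConcreteCategory.hom_ext _ _ Marker.restrict_self
  map_comp _ g := ConcreteCategory.hom_ext _ _ fun b =>
    (Marker.restrict_restrict _ _ (fun h => h.trans_le (leOfHom g.unop)) b).symm

lemma markerTower_surjTower (m : ℕ) : SurjTower (markerTower m) := fun n b =>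
  ⟨⟨b.1, fun h => (b.2 h).trans (Nat.lt_succ_self n)⟩, b.restrict_self⟩

def markerDiagram : ℕ ⥤ (ℕᵒᵖ ⥤ Type) where
  obj := markerTower
  map {m m'} u :=
    { app n := ↾Marker.restrict m' n.unop
      naturality _ _ f := ConcreteCategory.hom_ext _ _ fun b =>
        (Marker.restrict_restrict (m' := m) _ _ (fun h => (leOfHom u).trans_lt h) b).trans
          (Marker.restrict_restrict (m' := m') _ _ (fun h => h.trans_le (leOfHom f.unop)) b).symm }
  map_id _ := by ext n : 2; exact ConcreteCategory.hom_ext _ _ Marker.restrict_self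
  map_comp _ g := by
    ext n : 2
    exact ConcreteCategory.hom_ext _ _ fun b =>
      (Marker.restrict_restrict _ _ (fun h => (leOfHom g).trans_lt h) b).symm

namespace markerTower

variable (X : ℕᵒᵖ ⥤ Type) (m : ℕ)

def botHom : X ⟶ markerTower m where
  app n := ↾fun _ => Marker.bot m n.unop

def topHom : X ⟶ markerTower m where
  app n := ↾fun _ => Marker.top m n.unop
  naturality _ _ f := ConcreteCategory.hom_ext _ _ fun _ =>
    (Marker.restrict_top (m := m) fun h => h.trans_le (leOfHom f.unop)).symm

variable {X m}

lemma botHom_comp_map_app_eq {m' : ℕ} (u : m ⟶ m') {n : ℕ} (hn : n ≤ m') :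
    (botHom X m ≫ markerDiagram.map u).app (op n) =
      (topHom X m ≫ markerDiagram.map u).app (op n) :=
  ConcreteCategory.hom_ext _ _ fun _ =>
    (Marker.restrict_eq_bot hn.not_gt _).trans (Marker.restrict_eq_bot hn.not_gt _).symm

lemma botHom_comp_map_ne {k : ℕ} (u : m ⟶ k) (hX : Nonempty (X.obj (op (k + 1)))) :
    botHom X m ≫ markerDiagram.map u ≠ topHom X m ≫ markerDiagram.map u := by
  intro h
  obtain ⟨x⟩ := hX
  have h' : (Marker.top m (k + 1)).restrict k (k + 1) = Marker.bot k (k + 1) :=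
    (ConcreteCategory.congr_hom (NatTrans.congr_app h (op (k + 1))) x).symm
  exact Marker.top_ne_bot k.lt_succ_self
    ((Marker.restrict_top fun _ => Nat.lt_succ_of_le (leOfHom u)).symm.trans h')

lemma botHom_comp_ι_eq (c : Cocone markerDiagram) :
    botHom X m ≫ c.ι.app m = topHom X m ≫ c.ι.app m := by
  ext n : 2
  refine ConcreteCategory.hom_ext _ _ fun x => ?_
  let u : m ⟶ max m n.unop := homOfLE (le_max_left _ _)
  have hw y := ConcreteCategory.congr_hom (NatTrans.congr_app (c.w u) n) y
  exact (hw _).symm.trans ((congrArg _ (ConcreteCategory.congr_hom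
    (botHom_comp_map_app_eq u (le_max_right m n.unop)) x)).trans (hw _))

end markerTower

lemma SurjTower.not_preservesFilteredColimits_coyoneda
    (T : ObjectProperty.FullSubcategory SurjTower) (hT : ∃ n, Nonempty (T.obj.obj (op n))) :
    ¬ PreservesFilteredColimits (coyoneda.obj (op T)) := by
  intro _
  let D := ObjectProperty.lift SurjTower markerDiagram markerTower_surjTower
  let bot : T ⟶ D.obj 0 := ObjectProperty.homMk (markerTower.botHom T.obj 0)
  let top : T ⟶ D.obj 0 := ObjectProperty.homMk (markerTower.topHom T.obj 0)
  have h_colim : bot ≫ colimit.ι D 0 = top ≫ colimit.ι D 0 := ObjectProperty.hom_ext _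
    (markerTower.botHom_comp_ι_eq ((ObjectProperty.ι SurjTower).mapCocone (colimit.cocone D)))
  obtain ⟨k, u, h⟩ :=
    exists_eq_of_preservesColimit_coyoneda_self (colimit.isColimit D) bot top h_colim
  exact markerTower.botHom_comp_map_ne u (T.property.nonempty_obj hT.choose_spec (k + 1))
    (congrArg (·.hom) h)

/-- The full subcategory of towers of sets with surjective transition maps is closed under
filtered colimits (computed levelwise, i.e. in the functor category), and every one of its
objects with some nonempty level fails to be compact; that is, the only compact object of
this subcategory is the empty tower.  (An object `X` is *compact* if `Hom(X, -)`
preserves filtered colimits.) -/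
theorem surjTower_closed_under_filtered_colimits_and_no_nonempty_compacts :
    (∀ (J : Type) [SmallCategory J] [IsFiltered J] (K : J ⥤ (ℕᵒᵖ ⥤ Type)),
      (∀ j, SurjTower (K.obj j)) → SurjTower (colimit K)) ∧
    (∀ T : ObjectProperty.FullSubcategory SurjTower,
      (∃ n : ℕ, Nonempty (T.obj.obj (op n))) →
      ¬ PreservesFilteredColimits (coyoneda.obj (op T))) ∧
    (∀ T : ObjectProperty.FullSubcategory SurjTower,
      PreservesFilteredColimits (coyoneda.obj (op T)) →
      ∀ n : ℕ, IsEmpty (T.obj.obj (op n))) :=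
  ⟨fun _ _ _ K hK => ObjectProperty.prop_colimit SurjTower K hK,
    SurjTower.not_preservesFilteredColimits_coyoneda,
    fun T hT n => not_nonempty_iff.mp fun hn =>
      SurjTower.not_preservesFilteredColimits_coyoneda T ⟨n, hn⟩ hT⟩
end
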